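/- arXiv:2508.18223 — 8 statements merged into one kernel-verified Lean document; each statement's English description precedes it below -/
import Mathlib

section
/- In Wise's word Σ(a_1,…,a_m) = (a_1a_1a_2a_1a_3⋯a_1a_m)(a_2a_2a_3a_2a_4⋯a_2a_m)⋯(a_{m-1}a_{m-1}a_m)a_m, every two-letter word a_k a_l occurs at most once as a (contiguous) subword. -/
/-- The `i`-th block of Wise's word (letters are 0-indexed, so `a_{i+1}` in the paper
is the letter `i` here): the letter `i` followed by the pairs `i, j` for
`j = i+1, …, m-1`. -/
def wiseBlock (m i : ℕ) : List ℕ :=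
  i :: (List.range (m - 1 - i)).flatMap (fun j => [i, i + 1 + j])

/-- Wise's word `Σ(a_1, …, a_m)` (with letters 0-indexed as `0, …, m-1`). -/
def wiseWord (m : ℕ) : List ℕ :=
  (List.range (m - 1)).flatMap (wiseBlock m) ++ [m - 1]

/-- The number of occurrences of the two-letter word `k l` as a contiguous subword
of `w`. -/
def twoLetterOcc (w : List ℕ) (k l : ℕ) : ℕ :=
  (List.range w.length).countP (fun p => (w.drop p).take 2 = [k, l])

/-- Recursive count of the occurrences of the two-letter word `k l`. -/
def occ2 (k l : ℕ) : List ℕ → ℕ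
  | [] => 0
  | [_] => 0
  | x :: y :: t => (if x = k ∧ y = l then 1 else 0) + occ2 k l (y :: t)

lemma twoLetterOcc_cons (x k l : ℕ) (w : List ℕ) :
    twoLetterOcc (x :: w) k l =
      (if (x :: w).take 2 = [k, l] then 1 else 0) + twoLetterOcc w k l := by
  simp only [twoLetterOcc, List.length_cons, List.range_succ_eq_map, List.countP_cons,
    List.countP_map]
  simp only [List.drop_zero]
  rw [Nat.add_comm]
  congr 1
  simp

lemma twoLetterOcc_eq_occ2 (k l : ℕ) (w : List ℕ) :
    twoLetterOcc w k l = occ2 k l w := by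
  induction w with
  | nil => rfl
  | cons x w ih =>
    rw [twoLetterOcc_cons, ih]
    cases w with
    | nil => simp [occ2, twoLetterOcc]
    | cons y t =>
      simp only [occ2, List.take_cons]
      congr 1
      simp

lemma occ2_cons (k l x : ℕ) (w : List ℕ) :
    occ2 k l (x :: w) = (if x = k ∧ w.head? = some l then 1 else 0) + occ2 k l w := by
  cases w with
  | nil => simp [occ2]
  | cons y t => simp [occ2]

lemma occ2_append (k l : ℕ) (u v : List ℕ) :
    occ2 k l (u ++ v) = occ2 k l u + occ2 k l v +
      (if u.getLast? = some k ∧ v.head? = some l then 1 else 0) := by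
  induction u with
  | nil => simp [occ2]
  | cons x u ih =>
    rw [List.cons_append, occ2_cons, ih, occ2_cons]
    cases u with
    | nil =>
      simp only [List.nil_append, List.head?_nil, List.getLast?_nil, List.getLast?_singleton,
        Option.some.injEq, occ2]
      split_ifs <;> (try simp_all) <;> omega
    | cons y t =>
      rw [List.cons_append, List.head?_cons, List.head?_cons, List.getLast?_cons_cons]
      omega

/-- A generic lemma for adding three 0/1 indicator values. -/
lemma ite_add3 (A B C D : Prop) [Decidable A] [Decidable B] [Decidable C] [Decidable D]
    (h1 : A ∨ B ∨ C ↔ D) (h2 : ¬(A ∧ B)) (h3 : ¬(A ∧ C)) (h4 : ¬(B ∧ C)) :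
    ((if A then (1:ℕ) else 0) + (if B then 1 else 0)) + (if C then 1 else 0) =
      if D then 1 else 0 := by
  by_cases hA : A <;> by_cases hB : B <;> by_cases hC : C <;> simp_all

/-- The tail of a block: the pairs `i, i+1+j` for `j < T`. -/
def chunkTail (i T : ℕ) : List ℕ :=
  (List.range T).flatMap (fun j => [i, i + 1 + j])

lemma chunkTail_succ (i T : ℕ) :
    chunkTail i (T + 1) = chunkTail i T ++ [i, i + 1 + T] := by
  simp [chunkTail, List.range_succ]

lemma getLast?_cons_chunkTail (i T : ℕ) :
    (i :: chunkTail i T).getLast? = some (if T = 0 then i else i + T) := by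
  induction T with
  | zero => simp [chunkTail]
  | succ T ih =>
    rw [chunkTail_succ, ← List.cons_append, List.getLast?_append]
    have : ([i, i + 1 + T] : List ℕ).getLast? = some (i + 1 + T) := by simp
    rw [this]
    show some (i + 1 + T) = _
    rw [if_neg (Nat.succ_ne_zero T)]
    congr 1
    omega

lemma occ2_cons_chunkTail (k l i T : ℕ) :
    occ2 k l (i :: chunkTail i T) =
      if (k = i ∧ l = i ∧ 1 ≤ T) ∨ (k = i ∧ i < l ∧ l ≤ i + T) ∨
          (l = i ∧ i < k ∧ k < i + T) then 1 else 0 := by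
  induction T with
  | zero =>
    show occ2 k l [i] = _
    rw [show occ2 k l [i] = 0 from rfl, if_neg (by omega)]
  | succ T ih =>
    rw [chunkTail_succ, ← List.cons_append, occ2_append, ih, getLast?_cons_chunkTail]
    rw [show occ2 k l [i, i + 1 + T] = if i = k ∧ i + 1 + T = l then 1 else 0 by simp [occ2]]
    rw [List.head?_cons]
    simp only [Option.some.injEq]
    rcases Nat.eq_zero_or_pos T with hT | hT
    · subst hT; norm_num; split_ifs <;> omega
    · rw [if_neg (by omega : ¬ T = 0)]
      apply ite_add3 <;> omega

lemma wiseBlock_eq (m i : ℕ) : wiseBlock m i = i :: chunkTail i (m - 1 - i) := rfl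

lemma getLast?_wiseBlock (m i : ℕ) (hi : i < m - 1) :
    (wiseBlock m i).getLast? = some (m - 1) := by
  rw [wiseBlock_eq, getLast?_cons_chunkTail, if_neg (by omega)]
  congr 1
  omega

lemma occ2_wiseBlock (m k l i : ℕ) (hi : i < m - 1) :
    occ2 k l (wiseBlock m i) =
      if (k = i ∧ l = i) ∨ (k = i ∧ i < l ∧ l ≤ m - 1) ∨
          (l = i ∧ i < k ∧ k ≤ m - 2) then 1 else 0 := by
  rw [wiseBlock_eq, occ2_cons_chunkTail]
  split_ifs <;> omega

/-- The prefix of Wise's word consisting of the first `n` blocks. -/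
def wisePrefix (m n : ℕ) : List ℕ := (List.range n).flatMap (wiseBlock m)

lemma wisePrefix_succ (m n : ℕ) :
    wisePrefix m (n + 1) = wisePrefix m n ++ wiseBlock m n := by
  simp [wisePrefix, List.range_succ]

lemma getLast?_wisePrefix (m n : ℕ) (h1 : 1 ≤ n) (hn : n ≤ m - 1) :
    (wisePrefix m n).getLast? = some (m - 1) := by
  induction n with
  | zero => omega
  | succ n ih =>
    rw [wisePrefix_succ, List.getLast?_append, getLast?_wiseBlock m n (by omega)]
    rfl

lemma occ2_wisePrefix (m k l : ℕ) : ∀ n, n ≤ m - 1 →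
    occ2 k l (wisePrefix m n) =
      if (k = l ∧ k < n) ∨ (k < l ∧ k < n ∧ l ≤ m - 1) ∨
          (l < k ∧ l < n ∧ k ≤ m - 2) ∨ (k = m - 1 ∧ 1 ≤ l ∧ l < n) then 1 else 0 := by
  intro n
  induction n with
  | zero =>
    intro _
    rw [show occ2 k l (wisePrefix m 0) = 0 from rfl, if_neg (by omega)]
  | succ n ih =>
    intro hn
    rw [wisePrefix_succ, occ2_append, ih (by omega), occ2_wiseBlock m k l n (by omega)]
    rw [show (wiseBlock m n).head? = some n from rfl]
    rcases Nat.eq_zero_or_pos n with h0 | h0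
    · subst h0
      rw [show (wisePrefix m 0).getLast? = none from rfl,
        if_neg (by simp : ¬ ((none : Option ℕ) = some k ∧ (some 0 : Option ℕ) = some l))]
      split_ifs <;> omega
    · rw [getLast?_wisePrefix m n h0 (by omega)]
      simp only [Option.some.injEq]
      apply ite_add3 <;> omega

/-- Every two-letter word `a_k a_l` occurs at most once as a contiguous subword of
Wise's word `Σ(a_1, …, a_m)`. -/
theorem wiseWord_no_two_letter_repetition (m k l : ℕ) :
    twoLetterOcc (wiseWord m) k l ≤ 1 := by
  rw [twoLetterOcc_eq_occ2]
  have hw : wiseWord m = wisePrefix m (m - 1) ++ [m - 1] := rfl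
  rw [hw, occ2_append, occ2_wisePrefix m k l (m - 1) le_rfl]
  rw [show occ2 k l [m - 1] = 0 from rfl]
  rcases Nat.eq_zero_or_pos (m - 1) with h0 | h0
  · rw [h0]
    rw [show (wisePrefix m 0).getLast? = none from rfl,
      if_neg (by simp : ¬ ((none : Option ℕ) = some k ∧ ([0] : List ℕ).head? = some l))]
    split_ifs <;> omega
  · rw [getLast?_wisePrefix m (m - 1) h0 le_rfl, List.head?_cons]
    simp only [Option.some.injEq]
    split_ifs <;> omega
end

section
/- Let G be a torsion-free group in which every centralizer of a nontrivial element is infinite cyclic, and let H ≤ G be a retract of G (i.e., there is a homomorphism φ : G → G with image H and φ(h) = h for all h ∈ H). Then for every g ∈ G, if g^n ∈ H for some n ≥ 1, then g ∈ H. -/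
def Monoid.IsTorsionFree (G : Type*) [Monoid G] : Prop :=
  ∀ g : G, g ≠ 1 → ¬IsOfFinOrder g

/-!
Roots in `G` are unique. If `xⁿ = yⁿ ≠ 1`, then `x` and `y` both lie in the centralizer of `xⁿ`,
a copy of `ℤ`, where roots are unique; and a nontrivial `z` with `zⁿ = 1` would be torsion in the
copy of `ℤ` centralizing `z`. Now if `gⁿ` lies in the image of a retraction `φ`, then
`(φ g)ⁿ = φ (gⁿ) = gⁿ`, hence `g = φ g` lies in the image.
-/

theorem Subgroup.eq_of_pow_eq_pow {G : Type*} [Group G] {K : Subgroup G} [IsMulTorsionFree K]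
    {x y : G} (hx : x ∈ K) (hy : y ∈ K) {n : ℕ} (hn : n ≠ 0) (h : x ^ n = y ^ n) : x = y :=
  congrArg Subtype.val <| pow_left_injective (M := K) (a₁ := ⟨x, hx⟩) (a₂ := ⟨y, hy⟩) hn <|
    Subtype.ext (by simpa using h)

theorem eq_one_of_pow_eq_one_of_forall_isMulTorsionFree_centralizer {G : Type*} [Group G]
    (hK : ∀ c : G, c ≠ 1 → IsMulTorsionFree (Subgroup.centralizer {c}))
    {z : G} {n : ℕ} (hn : n ≠ 0) (hz : z ^ n = 1) : z = 1 := by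
  by_contra hz1
  have := hK z hz1
  have hz_mem : z ∈ Subgroup.centralizer {z} := Subgroup.mem_centralizer_singleton_iff.2 rfl
  exact hz1 <| Subgroup.eq_of_pow_eq_pow hz_mem (Subgroup.one_mem _) hn (by rw [hz, one_pow])

theorem isMulTorsionFree_of_forall_isMulTorsionFree_centralizer {G : Type*} [Group G]
    (hK : ∀ c : G, c ≠ 1 → IsMulTorsionFree (Subgroup.centralizer {c})) :
    IsMulTorsionFree G := by
  refine ⟨fun n hn x y (hxy : x ^ n = y ^ n) ↦ ?_⟩
  by_cases hc : x ^ n = 1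
  · rw [eq_one_of_pow_eq_one_of_forall_isMulTorsionFree_centralizer hK hn hc,
      eq_one_of_pow_eq_one_of_forall_isMulTorsionFree_centralizer hK hn (hxy ▸ hc : y ^ n = 1)]
  have := hK _ hc
  have hx : x ∈ Subgroup.centralizer {x ^ n} :=
    Subgroup.mem_centralizer_singleton_iff.2 (Commute.self_pow x n).eq
  have hy : y ∈ Subgroup.centralizer {x ^ n} := by
    rw [Subgroup.mem_centralizer_singleton_iff, hxy]
    exact (Commute.self_pow y n).eq
  exact Subgroup.eq_of_pow_eq_pow hx hy hn hxy

theorem MonoidHom.mem_mrange_of_pow_mem_mrange {M : Type*} [Monoid M] [IsMulTorsionFree M]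
    (φ : M →* M) (hφ : ∀ h ∈ MonoidHom.mrange φ, φ h = h) {g : M} {n : ℕ} (hn : n ≠ 0)
    (hg : g ^ n ∈ MonoidHom.mrange φ) : g ∈ MonoidHom.mrange φ :=
  ⟨g, pow_left_injective hn <| show φ g ^ n = g ^ n by rw [← map_pow, hφ _ hg]⟩

theorem retract_root_closed_general {G : Type*} [Group G]
    (hcent : ∀ g : G, g ≠ 1 → Nonempty (Subgroup.centralizer {g} ≃* Multiplicative ℤ))
    (H : Subgroup G) (φ : G →* G) (hrange : φ.range = H)
    (hfix : ∀ h ∈ H, φ h = h) :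
    ∀ (g : G) (n : ℕ), 1 ≤ n → g ^ n ∈ H → g ∈ H := by
  have : IsMulTorsionFree G := isMulTorsionFree_of_forall_isMulTorsionFree_centralizer
    fun c hc ↦ (hcent c hc).some.injective.isMulTorsionFree (hcent c hc).some.toMonoidHom
  subst hrange
  intro g n hn hg
  exact φ.mem_mrange_of_pow_mem_mrange hfix (Nat.one_le_iff_ne_zero.1 hn) hg

/-- Let `G` be a torsion-free group in which the centralizer of every nontrivial
element is infinite cyclic, and let `H ≤ G` be a retract of `G` (there is a
homomorphism `φ : G → G` with image `H` fixing `H` pointwise). Then `H` is closed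
under taking roots: if `gⁿ ∈ H` for some `n ≥ 1`, then `g ∈ H`. -/
theorem retract_root_closed {G : Type*} [Group G]
    (htf : Monoid.IsTorsionFree G)
    (hcent : ∀ g : G, g ≠ 1 → Nonempty (Subgroup.centralizer {g} ≃* Multiplicative ℤ))
    (H : Subgroup G) (φ : G →* G) (hrange : φ.range = H)
    (hfix : ∀ h ∈ H, φ h = h) :
    ∀ (g : G) (n : ℕ), 1 ≤ n → g ^ n ∈ H → g ∈ H :=
  retract_root_closed_general hcent H φ hrange hfix
end

section
/- Let G be a torsion-free group in which the centralizer of every nontrivial element is infinite cyclic, and let H ≤ G be a retract of G. Then H is malnormal in G: for every g ∈ G \ H, H ∩ gHg^{-1} = {1}. -/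
theorem IsCyclic.exists_zpow_eq_zpow {K : Type*} [Group K] [IsCyclic K] (x : K) {y : K}
    (hy : y ≠ 1) : ∃ n : ℤ, n ≠ 0 ∧ ∃ m : ℤ, x ^ n = y ^ m := by
  obtain ⟨z, hz⟩ := IsCyclic.exists_generator (α := K)
  obtain ⟨a, rfl⟩ := Subgroup.mem_zpowers_iff.mp (hz x)
  obtain ⟨b, rfl⟩ := Subgroup.mem_zpowers_iff.mp (hz y)
  have hb : b ≠ 0 := by
    rintro rfl
    exact hy (zpow_zero z)
  exact ⟨b, hb, a, by rw [← zpow_mul, ← zpow_mul, mul_comm]⟩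

theorem Commute.exists_zpow_eq_zpow_of_isCyclic_centralizer {G : Type*} [Group G] {c h : G}
    (hcyc : IsCyclic (Subgroup.centralizer {h})) (hh : h ≠ 1) (hch : Commute c h) :
    ∃ n : ℤ, n ≠ 0 ∧ ∃ m : ℤ, c ^ n = h ^ m := by
  have hcC : c ∈ Subgroup.centralizer {h} := Subgroup.mem_centralizer_singleton_iff.mpr hch.eq
  have hhC : h ∈ Subgroup.centralizer {h} := Subgroup.mem_centralizer_singleton_iff.mpr rfl
  obtain ⟨n, hn, m, hnm⟩ :=
    IsCyclic.exists_zpow_eq_zpow (⟨c, hcC⟩ : Subgroup.centralizer {h}) (y := ⟨h, hhC⟩)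
      (by simpa [Subtype.ext_iff] using hh)
  exact ⟨n, hn, m, by simpa using congrArg Subtype.val hnm⟩

theorem eq_one_of_commute_of_map_eq_one {G K : Type*} [Group G] [Group K]
    (htf : Monoid.IsTorsionFree G) (φ : G →* K) {c h : G}
    (hcyc : IsCyclic (Subgroup.centralizer {h})) (hφh : ¬IsOfFinOrder (φ h))
    (hch : Commute c h) (hφc : φ c = 1) : c = 1 := by
  have hh : h ≠ 1 := by
    rintro rfl
    exact hφh (by simp)
  obtain ⟨n, hn, m, hcnm⟩ := hch.exists_zpow_eq_zpow_of_isCyclic_centralizer hcyc hh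
  have hφhm : φ h ^ m = 1 := by
    simpa [hφc] using (congrArg φ hcnm).symm
  have hm : m = 0 := by
    by_contra hm
    exact hφh (isOfFinOrder_iff_zpow_eq_one.mpr ⟨m, hm, hφhm⟩)
  have hcn : c ^ n = 1 := by rw [hcnm, hm, zpow_zero]
  by_contra hc
  exact htf c hc (isOfFinOrder_iff_zpow_eq_one.mpr ⟨n, hn, hcn⟩)

section Retraction

variable {G : Type*} [Group G] {φ : G →* G}

theorem commute_inv_map_mul_of_map_conj {g h : G} (hφh : φ h = h)
    (hφx : φ (g * h * g⁻¹) = g * h * g⁻¹) : Commute ((φ g)⁻¹ * g) h := by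
  have hconj : φ g * h * (φ g)⁻¹ = g * h * g⁻¹ := by simpa [hφh] using hφx
  calc (φ g)⁻¹ * g * h = (φ g)⁻¹ * (g * h * g⁻¹) * g := by group
    _ = (φ g)⁻¹ * (φ g * h * (φ g)⁻¹) * g := by rw [hconj]
    _ = h * ((φ g)⁻¹ * g) := by group

theorem map_inv_map_mul_eq_one {g : G} (hφφ : φ (φ g) = φ g) : φ ((φ g)⁻¹ * g) = 1 := by
  rw [map_mul, map_inv, hφφ, inv_mul_cancel]

end Retraction

/-- Let `G` be a torsion-free group in which the centralizer of every nontrivial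
element is infinite cyclic, and let `H ≤ G` be a retract of `G`. Then `H` is
malnormal in `G`: for every `g ∉ H`, the intersection `H ∩ gHg⁻¹` is trivial. -/
theorem retract_malnormal {G : Type*} [Group G]
    (htf : Monoid.IsTorsionFree G)
    (hcent : ∀ g : G, g ≠ 1 → Nonempty (Subgroup.centralizer {g} ≃* Multiplicative ℤ))
    (H : Subgroup G) (φ : G →* G) (hrange : φ.range = H)
    (hfix : ∀ h ∈ H, φ h = h) :
    ∀ g : G, g ∉ H → ∀ x : G, x ∈ H → (∃ h ∈ H, x = g * h * g⁻¹) → x = 1 := by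
  rintro g hg x hx ⟨h, hh, rfl⟩
  by_contra hx1
  have hh1 : h ≠ 1 := by
    rintro rfl
    exact hx1 (by group)
  have hφg : φ g ∈ H := hrange ▸ ⟨g, rfl⟩
  have hcyc : IsCyclic (Subgroup.centralizer {h}) := by
    obtain ⟨e⟩ := hcent h hh1
    exact (MulEquiv.isCyclic e).mpr inferInstance
  have hc : (φ g)⁻¹ * g = 1 :=
    eq_one_of_commute_of_map_eq_one htf φ hcyc (by rw [hfix h hh]; exact htf h hh1)
      (commute_inv_map_mul_of_map_conj (hfix h hh) (hfix _ hx))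
      (map_inv_map_mul_eq_one (hfix _ hφg))
  exact hg (inv_mul_eq_one.mp hc ▸ hφg)
end

section
/- Let G be a torsion-free group whose nontrivial centralizers are infinite cyclic, H a retract of G via φ : G → G, and suppose ghg^{-1} = h_1 for some nontrivial h, h_1 ∈ H and g ∈ G. Then g^{-1}φ(g) commutes with h, and consequently φ(g) = g, so g ∈ H. -/
/-- Let `G` be a torsion-free group whose nontrivial centralizers are infinite
cyclic, `H` a retract of `G` via `φ : G → G`, and suppose `g h g⁻¹ = h₁` for some
nontrivial `h, h₁ ∈ H` and `g ∈ G`. Then `g⁻¹ φ(g)` commutes with `h`, and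
consequently `φ(g) = g`, so `g ∈ H`. -/
theorem retract_conjugation {G : Type*} [Group G]
    (htf : Monoid.IsTorsionFree G)
    (hcent : ∀ g : G, g ≠ 1 → Nonempty (Subgroup.centralizer {g} ≃* Multiplicative ℤ))
    (H : Subgroup G) (φ : G →* G) (hrange : φ.range = H)
    (hfix : ∀ h ∈ H, φ h = h)
    (g h h₁ : G) (hh : h ∈ H) (hh₁ : h₁ ∈ H) (hne : h ≠ 1) (hne₁ : h₁ ≠ 1)
    (heq : g * h * g⁻¹ = h₁) :
    Commute (g⁻¹ * φ g) h ∧ φ g = g ∧ g ∈ H := by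
  have key : φ g * h * (φ g)⁻¹ = g * h * g⁻¹ := by
    have : φ (g * h * g⁻¹) = h₁ := by rw [heq]; exact hfix h₁ hh₁
    rw [map_mul, map_mul, map_inv, hfix h hh] at this
    rw [this, heq]
  set c : G := g⁻¹ * φ g with hc
  have comm : Commute c h := by
    rw [Commute, SemiconjBy]
    have h1 : φ g * h = g * h * g⁻¹ * φ g := by rw [← key]; group
    calc c * h = g⁻¹ * (φ g * h) := by rw [hc]; group
      _ = g⁻¹ * (g * h * g⁻¹ * φ g) := by rw [h1]
      _ = h * c := by rw [hc]; group
  have hφc : φ c = 1 := by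
    have : φ (φ g) = φ g := hfix (φ g) (hrange ▸ ⟨g, rfl⟩)
    rw [hc, map_mul, map_inv, this, inv_mul_cancel]
  have hc1 : c = 1 := by
    by_contra hcne
    obtain ⟨e⟩ := hcent c hcne
    have hcmem : c ∈ Subgroup.centralizer {c} := Subgroup.mem_centralizer_iff.mpr
      (by rintro x rfl; rfl)
    have hhmem : h ∈ Subgroup.centralizer {c} := Subgroup.mem_centralizer_iff.mpr
      (by rintro x rfl; exact comm.eq)
    set x : G := (e.symm (Multiplicative.ofAdd 1) : G) with hx
    set m : ℤ := Multiplicative.toAdd (e ⟨c, hcmem⟩) with hm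
    set n : ℤ := Multiplicative.toAdd (e ⟨h, hhmem⟩) with hn
    have hxc : x ^ m = c := by
      have : (e.symm (Multiplicative.ofAdd 1)) ^ m = e.symm (e ⟨c, hcmem⟩) := by
        rw [← map_zpow]
        congr 1
        rw [hm]
        simp [← ofAdd_zsmul]
      rw [e.symm_apply_apply] at this
      have := congrArg (Subtype.val) this
      simpa [hx] using this
    have hxh : x ^ n = h := by
      have : (e.symm (Multiplicative.ofAdd 1)) ^ n = e.symm (e ⟨h, hhmem⟩) := by
        rw [← map_zpow]
        congr 1
        rw [hn]
        simp [← ofAdd_zsmul]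
      rw [e.symm_apply_apply] at this
      have := congrArg (Subtype.val) this
      simpa [hx] using this
    have hm0 : m ≠ 0 := by
      intro h0
      rw [h0] at hxc
      exact hcne (by simpa using hxc.symm)
    have hφxm : φ x ^ m = 1 := by rw [← map_zpow, hxc, hφc]
    have hφx1 : φ x = 1 := by
      by_contra hne'
      exact htf (φ x) hne' (isOfFinOrder_iff_zpow_eq_one.mpr ⟨m, hm0, hφxm⟩)
    have : φ h = 1 := by rw [← hxh, map_zpow, hφx1, one_zpow]
    rw [hfix h hh] at this
    exact hne this
  have hφg : φ g = g := by
    have := hc1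
    rw [hc, inv_mul_eq_one] at this
    exact this.symm
  exact ⟨comm, hφg, by rw [← hrange, ← hφg]; exact ⟨g, rfl⟩⟩
end

section
/- Let φ = φ_{m,k} be the automorphism of the free group F = F(A_1,…,A_m,B_1,…,B_k) defined by φ(A_i) = A_1⋯A_{i-1} A_i A_{i-1}^{-1}⋯A_1^{-1} and φ(B_j) = A_1⋯A_m (B_1⋯B_j) A_{j-1}^{-1}⋯A_1^{-1}. Then for all n ≥ 1, φ^n(B_1) = A_1^n A_2^n ⋯ A_m^n B_1. -/
/-- The free group on generators `A_0, A_1, …` and `B_0, B_1, …` (0-indexed versions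
of the generators `A_1, …, A_m, B_1, …, B_k` of Brady–Soroko). -/
abbrev FG := FreeGroup (ℕ ⊕ ℕ)

/-- The generator `A_{i+1}` (0-indexed as `A i`). -/
def A (i : ℕ) : FG := FreeGroup.of (Sum.inl i)

/-- The generator `B_{j+1}` (0-indexed as `B j`). -/
def B (j : ℕ) : FG := FreeGroup.of (Sum.inr j)

/-- The product `A_1 A_2 ⋯ A_n` (i.e. `A 0 * A 1 * ⋯ * A (n-1)`). -/
def aProd (n : ℕ) : FG := ((List.range n).map A).prod

/-- The product `B_1 B_2 ⋯ B_n` (i.e. `B 0 * B 1 * ⋯ * B (n-1)`). -/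
def bProd (n : ℕ) : FG := ((List.range n).map B).prod

/-- The Brady–Soroko endomorphism `φ_{m,·}`, determined by
`φ(A_i) = A_1 ⋯ A_{i-1} · A_i · (A_1 ⋯ A_{i-1})⁻¹` and
`φ(B_j) = A_1 ⋯ A_m · (B_1 ⋯ B_j) · (A_1 ⋯ A_{j-1})⁻¹`. -/
def bsPhi (m : ℕ) : FG →* FG :=
  FreeGroup.lift (fun x => match x with
    | Sum.inl i => aProd i * A i * (aProd i)⁻¹
    | Sum.inr j => aProd m * bProd (j + 1) * (aProd j)⁻¹)

lemma bsPhi_A (m i : ℕ) : bsPhi m (A i) = aProd i * A i * (aProd i)⁻¹ := by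
  simp [bsPhi, A]

lemma bsPhi_B0 (m : ℕ) : bsPhi m (B 0) = aProd m * B 0 := by
  simp [bsPhi, B, bProd, aProd, List.range_succ]

lemma key (m n : ℕ) :
    ((List.range m).map (fun i => aProd i * A i ^ n * (aProd i)⁻¹)).prod
      = ((List.range m).map (fun i => A i ^ (n + 1))).prod * (aProd m)⁻¹ := by
  induction m with
  | zero => simp [aProd]
  | succ m ih =>
      rw [List.range_succ, List.map_append, List.map_append, List.prod_append,
        List.prod_append, ih]
      have h : aProd (m + 1) = aProd m * A m := by
        rw [aProd, List.range_succ]; simp [aProd]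
      simp [h, pow_succ, mul_assoc]

/-- For all `n ≥ 1`, `φⁿ(B_1) = A_1ⁿ A_2ⁿ ⋯ A_mⁿ B_1`. -/
theorem bsPhi_iterate_B_one (m n : ℕ) (hn : 1 ≤ n) :
    (⇑(bsPhi m))^[n] (B 0) = ((List.range m).map (fun i => A i ^ n)).prod * B 0 := by
  induction n with
  | zero => omega
  | succ n ih =>
      rcases Nat.eq_zero_or_pos n with h0 | hpos
      · subst h0
        simp [bsPhi_B0, aProd]
      · rw [Function.iterate_succ_apply', ih hpos, map_mul, bsPhi_B0,
          map_list_prod, List.map_map]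
        have : ((List.range m).map ((bsPhi m) ∘ fun i => A i ^ n)).prod
            = ((List.range m).map (fun i => aProd i * A i ^ n * (aProd i)⁻¹)).prod := by
          congr 1
          apply List.map_congr_left
          intro i _
          simp [Function.comp, map_pow, bsPhi_A, mul_pow,
            conj_pow]
        rw [this, key]
        group
end

section
/- With φ = φ_{m,k} defined by φ(A_i) = A_1⋯A_{i-1}A_i A_{i-1}^{-1}⋯A_1^{-1} and φ(B_j) = A_1⋯A_m(B_1⋯B_j)A_{j-1}^{-1}⋯A_1^{-1}, for every n ≥ 1 and every 1 ≤ j ≤ k there exists a positive word u (a product of the generators A_i, B_l with no inverses) such that φ^n(B_j) = A_1^n ⋯ A_m^n · u · B_j · A_{j-1}^{-n} ⋯ A_1^{-n}. -/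
/-!
Write `Qⁿ_i = A_1ⁿ ⋯ A_iⁿ`. Since `φ(Qⁿ_i) = Qⁿ⁺¹_i Q¹_i⁻¹`, one gets `φⁿ(Q¹_i) = Qⁿ⁺¹_i (Qⁿ_i)⁻¹`.
Expanding `φⁿ⁺¹(B_j) = φⁿ(Q¹_m) · φⁿ(B_1) ⋯ φⁿ(B_j) · φⁿ(Q¹_{j-1})⁻¹` and inserting the
normal forms of the `φⁿ(B_l)`, the junction between consecutive factors is
`(Qⁿ_{l-1})⁻¹ Qⁿ_m = A_lⁿ ⋯ A_mⁿ`, a positive word as long as `l ≤ m`, and the outer factors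
telescope to `Qⁿ⁺¹_m` and `(Qⁿ⁺¹_{j-1})⁻¹`.
-/

namespace BradySoroko

def powProd (n i : ℕ) : FG := ((List.range i).map (fun l => A l ^ n)).prod

lemma powProd_succ (n i : ℕ) : powProd n (i + 1) = powProd n i * A i ^ n := by
  simp [powProd, List.range_succ]

@[simp] lemma powProd_zero_left (i : ℕ) : powProd 0 i = 1 := by
  simp [powProd]

lemma powProd_one (i : ℕ) : powProd 1 i = aProd i := by
  simp [powProd, aProd]

lemma aProd_succ (i : ℕ) : aProd (i + 1) = aProd i * A i := by
  simp [aProd, List.range_succ]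

lemma bProd_succ (j : ℕ) : bProd (j + 1) = bProd j * B j := by
  simp [bProd, List.range_succ]

def positive : Submonoid FG := MonoidHom.mrange (FreeMonoid.lift FreeGroup.of)

lemma of_mem_positive (x : ℕ ⊕ ℕ) : FreeGroup.of x ∈ positive :=
  ⟨FreeMonoid.of x, FreeMonoid.lift_eval_of _ _⟩

lemma exists_list_of_mem_positive {x : FG} (hx : x ∈ positive) :
    ∃ u : List (ℕ ⊕ ℕ), (u.map FreeGroup.of).prod = x := by
  obtain ⟨w, rfl⟩ := hx
  exact ⟨w.toList, (FreeMonoid.lift_apply _ _).symm⟩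

lemma inv_powProd_mul_powProd_mem_positive (n : ℕ) {i j : ℕ} (h : i ≤ j) :
    (powProd n i)⁻¹ * powProd n j ∈ positive := by
  induction j, h using Nat.le_induction with
  | base => simp
  | succ j _ ih =>
    rw [powProd_succ, ← mul_assoc]
    exact mul_mem ih (pow_mem (of_mem_positive _) n)

section

variable (m : ℕ)

@[simp] lemma bsPhi_A (i : ℕ) : bsPhi m (A i) = aProd i * A i * (aProd i)⁻¹ := by
  simp [bsPhi, A]

@[simp] lemma bsPhi_B (j : ℕ) : bsPhi m (B j) = aProd m * bProd (j + 1) * (aProd j)⁻¹ := by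
  simp [bsPhi, B]

lemma bsPhi_powProd (n i : ℕ) : bsPhi m (powProd n i) = powProd (n + 1) i * (aProd i)⁻¹ := by
  induction i with
  | zero => simp [powProd, aProd]
  | succ i ih =>
    rw [powProd_succ, map_mul, ih, map_pow, bsPhi_A, conj_pow, powProd_succ, aProd_succ,
      pow_succ]
    group

lemma iterate_bsPhi_aProd (n i : ℕ) :
    (⇑(bsPhi m))^[n] (aProd i) = powProd (n + 1) i * (powProd n i)⁻¹ := by
  induction n with
  | zero => simp [powProd_one]
  | succ n ih =>
    rw [Function.iterate_succ_apply', ih, map_mul, map_inv, bsPhi_powProd, bsPhi_powProd]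
    group

def IsBForm (n j : ℕ) (x : FG) : Prop :=
  ∃ u ∈ positive, x = powProd n m * u * B j * (powProd n j)⁻¹

variable {m}

lemma IsBForm.mul {n i j : ℕ} {x y : FG} (hi : i ≤ m) (hx : IsBForm m n i x)
    (hy : IsBForm m n j y) : IsBForm m n j (x * y) := by
  obtain ⟨u, hu, rfl⟩ := hx
  obtain ⟨v, hv, rfl⟩ := hy
  refine ⟨u * B i * ((powProd n i)⁻¹ * powProd n m) * v,
    mul_mem (mul_mem (mul_mem hu (of_mem_positive _))
      (inv_powProd_mul_powProd_mem_positive n hi)) hv, ?_⟩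
  group

lemma isBForm_iterate_bProd {n j : ℕ} (hj : j ≤ m)
    (hB : ∀ l ≤ j, IsBForm m n l ((⇑(bsPhi m))^[n] (B l))) :
    IsBForm m n j ((⇑(bsPhi m))^[n] (bProd (j + 1))) := by
  induction j with
  | zero => simpa [bProd] using hB 0 le_rfl
  | succ j ih =>
    rw [bProd_succ, iterate_map_mul]
    exact (ih (by omega) fun l hl => hB l (by omega)).mul (by omega) (hB _ le_rfl)

lemma isBForm_iterate_B (n : ℕ) {j : ℕ} (hj : j ≤ m) :
    IsBForm m n j ((⇑(bsPhi m))^[n] (B j)) := by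
  induction n generalizing j with
  | zero => exact ⟨1, one_mem _, by simp⟩
  | succ n ih =>
    obtain ⟨u, hu, hprod⟩ := isBForm_iterate_bProd hj fun l hl => ih (hl.trans hj)
    refine ⟨u, hu, ?_⟩
    rw [Function.iterate_succ_apply, bsPhi_B, iterate_map_mul, iterate_map_mul, iterate_map_inv,
      hprod, iterate_bsPhi_aProd, iterate_bsPhi_aProd]
    group

end

end BradySoroko

open BradySoroko in
theorem bsPhi_iterate_B_form_general (m k n j : ℕ) (hj : j < k) (hk : k ≤ m) :
    ∃ u : List (ℕ ⊕ ℕ),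
      (⇑(bsPhi m))^[n] (B j) =
        ((List.range m).map (fun i => A i ^ n)).prod *
          (u.map FreeGroup.of).prod * B j *
          (((List.range j).map (fun i => A i ^ n)).prod)⁻¹ := by
  obtain ⟨v, hv, hform⟩ := isBForm_iterate_B n (hj.trans_le hk).le
  obtain ⟨u, rfl⟩ := exists_list_of_mem_positive hv
  exact ⟨u, hform⟩

/-- For every `n ≥ 1` and every `1 ≤ j ≤ k` (0-indexed: `j < k`), there is a
positive word `u` (a product of generators with no inverses) such that
`φⁿ(B_j) = A_1ⁿ ⋯ A_mⁿ · u · B_j · (A_1ⁿ ⋯ A_{j-1}ⁿ)⁻¹`. -/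
theorem bsPhi_iterate_B_form (m k n j : ℕ) (hn : 1 ≤ n) (hj : j < k) (hk : k ≤ m) :
    ∃ u : List (ℕ ⊕ ℕ),
      (⇑(bsPhi m))^[n] (B j) =
        ((List.range m).map (fun i => A i ^ n)).prod *
          (u.map FreeGroup.of).prod * B j *
          (((List.range j).map (fun i => A i ^ n)).prod)⁻¹ :=
  bsPhi_iterate_B_form_general m k n j hj hk
end

section
/- For real m, n > 0, the functions exp(x^m) and exp(x^n) are Lipschitz equivalent if and only if m = n. -/
/-!
Taking logarithms, `exp (xᵐ) ≤ C · exp ((Cx + C)ⁿ) + Cx + C` forces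
`xᵐ ≤ 2 log x + (2C)ⁿ xⁿ` for large `x`, which fails when `0 ≤ n < m` because the right-hand
side is `o(xᵐ)`. Conversely a nondecreasing function is equivalent to itself with `C = 1`.
-/

/-- Lipschitz equivalence of nondecreasing functions `ℕ → [0,∞)`: `f ≃ g` iff there
is `C ≥ 1` with `f(x) ≤ C·g(Cx + C) + Cx + C` and symmetrically. -/
def LipschitzEquivReal (f g : ℕ → ℝ) : Prop :=
  ∃ C : ℕ, 1 ≤ C ∧ ∀ x : ℕ,
    f x ≤ C * g (C * x + C) + C * x + C ∧
    g x ≤ C * f (C * x + C) + C * x + C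

open Real Filter Asymptotics

theorem LipschitzEquivReal.symm {f g : ℕ → ℝ} (h : LipschitzEquivReal f g) :
    LipschitzEquivReal g f := by
  obtain ⟨C, hC, hfg⟩ := h
  exact ⟨C, hC, fun x => (hfg x).symm⟩

theorem Monotone.lipschitzEquivReal_self {f : ℕ → ℝ} (hf : Monotone f) :
    LipschitzEquivReal f f := by
  have hle (x : ℕ) : f x ≤ (1 : ℕ) * f (1 * x + 1) + (1 : ℕ) * x + (1 : ℕ) := by
    simp only [Nat.cast_one, one_mul]
    linarith [hf (Nat.le_succ x), (Nat.cast_nonneg x : (0 : ℝ) ≤ x)]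
  exact ⟨1, le_rfl, fun x => ⟨hle x, hle x⟩⟩

theorem monotone_exp_rpow_natCast {m : ℝ} (hm : 0 ≤ m) :
    Monotone fun x : ℕ => exp ((x : ℝ) ^ m) :=
  fun _ _ hab => exp_le_exp.2 (rpow_le_rpow (Nat.cast_nonneg _) (Nat.cast_le.2 hab) hm)

theorem isLittleO_rpow_rpow_atTop_of_lt {a b : ℝ} (hab : a < b) :
    (fun x : ℝ => x ^ a) =o[atTop] (fun x : ℝ => x ^ b) := by
  rw [isLittleO_iff_tendsto']
  · refine (tendsto_rpow_neg_atTop (sub_pos.2 hab)).congr' ?_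
    filter_upwards [eventually_gt_atTop 0] with x hx
    rw [neg_sub, rpow_sub hx, div_eq_mul_inv]
  · filter_upwards [eventually_gt_atTop 0] with x hx h
    exact absurd h (rpow_pos_of_pos hx b).ne'

theorem eventually_two_mul_log_add_rpow_lt {m n : ℝ} (hn : 0 ≤ n) (hnm : n < m) (K : ℝ) :
    ∀ᶠ x : ℝ in atTop, 2 * log x + K * x ^ n < x ^ m := by
  have hsmall : (fun x => 2 * log x + K * x ^ n) =o[atTop] (fun x => x ^ m) :=
    ((isLittleO_log_rpow_atTop (hn.trans_lt hnm)).const_mul_left 2).add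
      ((isLittleO_rpow_rpow_atTop_of_lt hnm).const_mul_left K)
  have hpos : ∀ᶠ x : ℝ in atTop, 0 < ‖x ^ m‖ := by
    filter_upwards [eventually_gt_atTop 0] with x hx
    exact norm_pos_iff.2 (rpow_pos_of_pos hx m).ne'
  filter_upwards [hsmall.eventuallyLT_norm_of_eventually_pos hpos, eventually_gt_atTop 0]
    with x hx hx0
  calc 2 * log x + K * x ^ n ≤ ‖2 * log x + K * x ^ n‖ := le_norm_self _
    _ < ‖x ^ m‖ := hx
    _ = x ^ m := norm_of_nonneg (rpow_nonneg hx0.le m)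

theorem eventually_exp_rpow_gt {m n C : ℝ} (hn : 0 ≤ n) (hnm : n < m) (hC : 0 < C) :
    ∀ᶠ x : ℝ in atTop, C * exp ((C * x + C) ^ n) + C * x + C < exp (x ^ m) := by
  filter_upwards [eventually_two_mul_log_add_rpow_lt hn hnm ((2 * C) ^ n),
    eventually_ge_atTop 1, eventually_ge_atTop (3 * C)] with x hx hx1 hx3C
  have hx0 : 0 < x := one_pos.trans_le hx1
  have hy : 0 ≤ C * x + C := by positivity
  have hexp : 1 ≤ exp ((C * x + C) ^ n) := one_le_exp (rpow_nonneg hy n)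
  have hpow : (C * x + C) ^ n ≤ (2 * C) ^ n * x ^ n := by
    rw [← mul_rpow (by positivity) hx0.le]
    exact rpow_le_rpow hy (by nlinarith) hn
  calc C * exp ((C * x + C) ^ n) + C * x + C
      ≤ (C * x + 2 * C) * exp ((C * x + C) ^ n) := by nlinarith
    _ ≤ x ^ 2 * exp ((2 * C) ^ n * x ^ n) :=
        mul_le_mul (by nlinarith) (exp_le_exp.2 hpow) (exp_pos _).le (sq_nonneg x)
    _ = exp (2 * log x + (2 * C) ^ n * x ^ n) := by
        rw [exp_add, mul_comm (2 : ℝ) (log x), ← rpow_def_of_pos hx0, rpow_two]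
    _ < exp (x ^ m) := exp_lt_exp.2 hx

theorem not_lipschitzEquivReal_exp_rpow_of_lt {m n : ℝ} (hn : 0 ≤ n) (hnm : n < m) :
    ¬ LipschitzEquivReal (fun x : ℕ => exp ((x : ℝ) ^ m)) (fun x : ℕ => exp ((x : ℝ) ^ n)) := by
  rintro ⟨C, hC, hle⟩
  have hC0 : (0 : ℝ) < C := by exact_mod_cast hC
  obtain ⟨x, hx⟩ :=
    (tendsto_natCast_atTop_atTop.eventually (eventually_exp_rpow_gt hn hnm hC0)).exists
  have hbound := (hle x).1
  push_cast at hbound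
  exact hbound.not_gt hx

/-- For real `m, n > 0`, the functions `exp(xᵐ)` and `exp(xⁿ)` are Lipschitz
equivalent if and only if `m = n`. -/
theorem exp_rpow_lipschitzEquiv_iff (m n : ℝ) (hm : 0 < m) (hn : 0 < n) :
    LipschitzEquivReal (fun x : ℕ => Real.exp ((x : ℝ) ^ m))
      (fun x : ℕ => Real.exp ((x : ℝ) ^ n)) ↔ m = n := by
  constructor
  · intro h
    by_contra hne
    rcases lt_or_gt_of_ne hne with hlt | hlt
    · exact not_lipschitzEquivReal_exp_rpow_of_lt hm.le hlt h.symm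
    · exact not_lipschitzEquivReal_exp_rpow_of_lt hn.le hlt h
  · rintro rfl
    exact (monotone_exp_rpow_natCast hm.le).lipschitzEquivReal_self
end

section
/- Let X and Y be metric simplicial/polyhedral 2-complexes realized as topological spaces, Z a common subcomplex, and suppose at a glued vertex v the link satisfies Lk(v, X ⊔_Z Y) = Lk(v,X) ⊔_{Lk(v,Z)} Lk(v,Y) where Lk(v,Z) is a discrete set of points any two of which are at distance ≥ 2π in Lk(v,X). Then every loop in the glued link Lk(v, X ⊔_Z Y) has length ≥ 2π, provided every loop in Lk(v,X) and in Lk(v,Y) has length ≥ 2π. (Graph-theoretic version: if A and B are metric graphs glued along a finite vertex set P, every cycle in A and in B has length ≥ 2π, and any two points of P are at distance ≥ 2π in A, then every cycle in the glued graph has length ≥ 2π.) -/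
/-!
A cycle lying entirely in `A` or in `B` is long by hypothesis. Otherwise rotate the cycle so that
it leaves its base point `p` along an edge of `A` and returns along an edge of `B`, and follow it
until it first takes an edge outside `A`, at a vertex `q`. Both `p` and `q` carry edges of `A` and
of `B`, so they lie in `P`; they are distinct because a cycle does not revisit vertices. The arc
from `p` to `q` is a walk in `A` between distinct points of `P`, hence has length at least `2π`,
and the remaining edges have positive length.
-/

theorem List.exists_rotate_head_last {α : Type*} (p : α → Prop) {l : List α}
    (ha : ∃ a ∈ l, p a) (hb : ∃ b ∈ l, ¬ p b) :
    ∃ (n : ℕ) (h : l.rotate n ≠ []), p ((l.rotate n).head h) ∧ ¬ p ((l.rotate n).getLast h) := by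
  classical
  obtain ⟨b, hbl, hpb⟩ := hb
  obtain ⟨l₁, l₂, rfl⟩ := List.append_of_mem hbl
  set t := (b :: (l₂ ++ l₁)).takeWhile (fun x => !decide (p x))
  set d := (b :: (l₂ ++ l₁)).dropWhile (fun x => !decide (p x))
  have ht : t ≠ [] := by simp [t, hpb]
  have hd : d ≠ [] := by
    obtain ⟨a, ha, hpa⟩ := ha
    have ha' : a ∈ b :: (l₂ ++ l₁) := by simp only [List.mem_append, List.mem_cons] at ha ⊢; tauto
    intro h
    simpa [hpa] using List.dropWhile_eq_nil_iff.mp h a ha'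
  have hrot : (l₁ ++ b :: l₂).rotate (l₁.length + t.length) = d ++ t := by
    rw [← List.rotate_rotate, List.rotate_append_length_eq, List.cons_append,
      ← List.takeWhile_append_dropWhile (p := fun x => !decide (p x)) (l := b :: (l₂ ++ l₁)),
      List.rotate_append_length_eq]
  refine ⟨l₁.length + t.length, by simp [hrot, hd], ?_, ?_⟩
  · simp only [hrot, List.head_append_of_ne_nil hd, List.head_eq_getElem]
    simpa using List.dropWhile_get_zero_not _ _ (List.length_pos_of_ne_nil hd)
  · simp only [hrot, List.getLast_append_of_ne_nil _ ht]
    simpa using List.mem_takeWhile_imp (List.getLast_mem ht)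

namespace SimpleGraph.Walk

variable {V : Type*} {G : SimpleGraph V}

theorem IsCycle.append_comm {u v : V} {p : G.Walk u v} {q : G.Walk v u}
    (h : (p.append q).IsCycle) : (q.append p).IsCycle := by
  rw [isCycle_def, isTrail_def, edges_append, tail_support_append, Ne, eq_nil_iff_nil,
    ← length_eq_zero_iff, length_append] at h ⊢
  obtain ⟨hedges, hlength, hsupport⟩ := h
  exact ⟨List.perm_append_comm.nodup_iff.mp hedges, by omega,
    List.perm_append_comm.nodup_iff.mp hsupport⟩

theorem IsCycle.exists_edges_eq_rotate {v : V} {c : G.Walk v v} (hc : c.IsCycle) (n : ℕ) :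
    ∃ (u : V) (c' : G.Walk u u), c'.IsCycle ∧ c'.edges = c.edges.rotate n := by
  refine ⟨_, (c.drop (n % c.length)).append (c.take (n % c.length)), ?_, ?_⟩
  · exact IsCycle.append_comm (by rwa [append_take_drop_eq])
  · rw [edges_append, edges_drop, edges_take, List.rotate_eq_drop_append_take_mod, length_edges]

theorem IsCycle.exists_rotate_snd_mem_penultimate_not_mem {v : V} {c : G.Walk v v}
    (hc : c.IsCycle) (S : Set (Sym2 V)) (hS : ∃ e ∈ c.edges, e ∈ S)
    (hSc : ∃ e ∈ c.edges, e ∉ S) :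
    ∃ (u : V) (c' : G.Walk u u), c'.IsCycle ∧ c'.edges.Perm c.edges ∧
      s(u, c'.snd) ∈ S ∧ s(c'.penultimate, u) ∉ S := by
  obtain ⟨n, hne, hhead, hlast⟩ := List.exists_rotate_head_last (· ∈ S) hS hSc
  obtain ⟨u, c', hc', hedges⟩ := hc.exists_edges_eq_rotate n
  refine ⟨u, c', hc', hedges ▸ List.rotate_perm _ _, ?_, ?_⟩
  · rw [← c'.head_edges_eq_mk_start_snd (hedges ▸ hne)]
    simpa only [hedges] using hhead
  · rw [← c'.getLast_edges_eq_mk_penultimate_end (hedges ▸ hne)]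
    simpa only [hedges] using hlast

theorem exists_eq_append_maximal_prefix (S : Set (Sym2 V)) :
    ∀ {u v : V} (p : G.Walk u v), ∃ (w : V) (p₁ : G.Walk u w) (p₂ : G.Walk w v),
      p = p₁.append p₂ ∧ (∀ e ∈ p₁.edges, e ∈ S) ∧ (¬ p₂.Nil → s(w, p₂.snd) ∉ S)
  | u, _, nil => ⟨u, nil, nil, rfl, by simp, fun h => (h nil_nil).elim⟩
  | u, _, @cons _ _ _ x _ h p => by
    by_cases hux : s(u, x) ∈ S
    · obtain ⟨w, p₁, p₂, rfl, hp₁, hp₂⟩ := exists_eq_append_maximal_prefix S p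
      refine ⟨w, cons h p₁, p₂, rfl, ?_, hp₂⟩
      simpa only [edges_cons, List.forall_mem_cons] using ⟨hux, hp₁⟩
    · exact ⟨u, nil, cons h p, rfl, by simp, fun _ => by simpa [snd_cons] using hux⟩

end SimpleGraph.Walk

namespace SimpleGraph

variable {V : Type*} {GA GB : SimpleGraph V} {ℓA ℓB : Sym2 V → ℝ}

open Classical in
noncomputable def glueLength (GA : SimpleGraph V) (ℓA ℓB : Sym2 V → ℝ) (e : Sym2 V) : ℝ :=
  if e ∈ GA.edgeSet then ℓA e else ℓB e

theorem sum_map_glueLength_of_forall_mem_left {l : List (Sym2 V)}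
    (hl : ∀ e ∈ l, e ∈ GA.edgeSet) : (l.map (glueLength GA ℓA ℓB)).sum = (l.map ℓA).sum := by
  congr 1
  exact List.map_congr_left fun e he => if_pos (hl e he)

theorem sum_map_glueLength_of_forall_mem_right (hdisj : Disjoint GA.edgeSet GB.edgeSet)
    {l : List (Sym2 V)} (hl : ∀ e ∈ l, e ∈ GB.edgeSet) :
    (l.map (glueLength GA ℓA ℓB)).sum = (l.map ℓB).sum := by
  congr 1
  exact List.map_congr_left fun e he => if_neg (hdisj.notMem_of_mem_right (hl e he))

theorem Walk.mem_edgeSet_right_of_mem_edges {u v : V} {w : (GA ⊔ GB).Walk u v} {e : Sym2 V}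
    (he : e ∈ w.edges) (heA : e ∉ GA.edgeSet) : e ∈ GB.edgeSet :=
  (edgeSet_sup GA GB ▸ w.edges_subset_edgeSet he).resolve_left heA

theorem Walk.sum_map_glueLength_nonneg (hA : ∀ e ∈ GA.edgeSet, 0 ≤ ℓA e)
    (hB : ∀ e ∈ GB.edgeSet, 0 ≤ ℓB e) {u v : V} (w : (GA ⊔ GB).Walk u v) :
    0 ≤ (w.edges.map (glueLength GA ℓA ℓB)).sum := by
  refine List.sum_nonneg fun x hx => ?_
  obtain ⟨e, he, rfl⟩ := List.mem_map.mp hx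
  unfold glueLength
  split_ifs with heA
  · exact hA e heA
  · exact hB e (mem_edgeSet_right_of_mem_edges he heA)

theorem mem_of_mem_edgeSet_of_mem_edgeSet {P : Set V} (hglue : GA.support ∩ GB.support ⊆ P)
    {x y z : V} (hA : s(x, y) ∈ GA.edgeSet) (hB : s(y, z) ∈ GB.edgeSet) : y ∈ P :=
  hglue ⟨GA.mem_support.2 ⟨x, (GA.mem_edgeSet.1 hA).symm⟩, GB.mem_support.2 ⟨z, hB⟩⟩

theorem Walk.IsCycle.le_sum_map_glueLength_of_mem_of_not_mem {P : Set V} {r : ℝ}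
    (hA : ∀ e ∈ GA.edgeSet, 0 ≤ ℓA e) (hB : ∀ e ∈ GB.edgeSet, 0 ≤ ℓB e)
    (hglue : GA.support ∩ GB.support ⊆ P)
    (hultra : ∀ p ∈ P, ∀ q ∈ P, p ≠ q → ∀ w : GA.Walk p q, r ≤ (w.edges.map ℓA).sum)
    {u : V} {c : (GA ⊔ GB).Walk u u} (hc : c.IsCycle)
    (hfirst : s(u, c.snd) ∈ GA.edgeSet) (hlast : s(c.penultimate, u) ∉ GA.edgeSet) :
    r ≤ (c.edges.map (glueLength GA ℓA ℓB)).sum := by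
  have hu : u ∈ P := mem_of_mem_edgeSet_of_mem_edgeSet hglue (Sym2.eq_swap ▸ hfirst)
    (Sym2.eq_swap ▸ mem_edgeSet_right_of_mem_edges (mk_penultimate_end_mem_edges hc.not_nil) hlast)
  obtain ⟨q, a, b, rfl, haA, hbA⟩ := c.exists_eq_append_maximal_prefix GA.edgeSet
  have ha : ¬ a.Nil := by
    cases a with
    | nil => exact fun _ => hbA hc.not_nil hfirst
    | cons => exact not_nil_cons
  have hb : ¬ b.Nil := fun hb => by
    refine hlast (haA _ ?_)
    rw [← edges_eq_nil] at hb
    simpa [edges_append, hb] using mk_penultimate_end_mem_edges hc.not_nil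
  have hq : q ∈ P := mem_of_mem_edgeSet_of_mem_edgeSet hglue
    (haA _ (mk_penultimate_end_mem_edges ha))
    (mem_edgeSet_right_of_mem_edges (mk_start_snd_mem_edges hb) (hbA hb))
  have huq : u ≠ q := by
    rintro rfl
    have hnodup := hc.support_nodup
    rw [tail_support_append] at hnodup
    exact List.disjoint_of_nodup_append hnodup (end_mem_tail_support ha)
      (end_mem_tail_support hb)
  calc r ≤ (a.edges.map ℓA).sum := by
        simpa only [edges_transfer] using hultra u hu q hq huq (a.transfer GA haA)
    _ = (a.edges.map (glueLength GA ℓA ℓB)).sum := (sum_map_glueLength_of_forall_mem_left haA).symm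
    _ ≤ (a.edges.map (glueLength GA ℓA ℓB)).sum + (b.edges.map (glueLength GA ℓA ℓB)).sum :=
        le_add_of_nonneg_right (b.sum_map_glueLength_nonneg hA hB)
    _ = ((a.append b).edges.map (glueLength GA ℓA ℓB)).sum := by
        rw [edges_append, List.map_append, List.sum_append]

end SimpleGraph

open Real SimpleGraph Walk

open Classical in
theorem glued_graph_large_girth_general {V : Type*} (GA GB : SimpleGraph V)
    (ℓA ℓB : Sym2 V → ℝ) (P : Set V)
    (hposA : ∀ e ∈ GA.edgeSet, 0 < ℓA e)
    (hposB : ∀ e ∈ GB.edgeSet, 0 < ℓB e)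
    (hedisj : GA.edgeSet ∩ GB.edgeSet = ∅)
    (hglue : GA.support ∩ GB.support ⊆ P)
    (hcycA : ∀ (v : V) (w : GA.Walk v v), w.IsCycle → 2 * π ≤ (w.edges.map ℓA).sum)
    (hcycB : ∀ (v : V) (w : GB.Walk v v), w.IsCycle → 2 * π ≤ (w.edges.map ℓB).sum)
    (hultra : ∀ p ∈ P, ∀ q ∈ P, p ≠ q →
      ∀ w : GA.Walk p q, 2 * π ≤ (w.edges.map ℓA).sum) :
    ∀ (v : V) (w : (GA ⊔ GB).Walk v v), w.IsCycle →
      2 * π ≤ (w.edges.map (fun e => if e ∈ GA.edgeSet then ℓA e else ℓB e)).sum := by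
  intro v c hc
  change 2 * π ≤ (c.edges.map (glueLength GA ℓA ℓB)).sum
  by_cases hA : ∀ e ∈ c.edges, e ∈ GA.edgeSet
  · rw [sum_map_glueLength_of_forall_mem_left hA]
    simpa only [edges_transfer] using hcycA v (c.transfer GA hA) (hc.transfer hA)
  by_cases hB : ∀ e ∈ c.edges, e ∈ GB.edgeSet
  · rw [sum_map_glueLength_of_forall_mem_right (Set.disjoint_iff_inter_eq_empty.2 hedisj) hB]
    simpa only [edges_transfer] using hcycB v (c.transfer GB hB) (hc.transfer hB)
  push Not at hA hB
  obtain ⟨eB, heB, heBA⟩ := hA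
  obtain ⟨eA, heA, heAB⟩ := hB
  obtain ⟨u, c', hc', hperm, hfirst, hlast⟩ := hc.exists_rotate_snd_mem_penultimate_not_mem
    GA.edgeSet ⟨eA, heA, not_not.1 (mt (mem_edgeSet_right_of_mem_edges heA) heAB)⟩
    ⟨eB, heB, heBA⟩
  rw [← (hperm.map _).sum_eq]
  exact hc'.le_sum_map_glueLength_of_mem_of_not_mem (fun e he => (hposA e he).le)
    (fun e he => (hposB e he).le) hglue hultra hfirst hlast

open Classical in
/-- Ultra-convex gluing, graph-theoretic version: let `A`, `B` be metric graphs on a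
common vertex type, glued along a finite vertex set `P` (their common vertices all
lie in `P`, and they share no edges). If every cycle in `A` and in `B` has length
at least `2π`, and any two distinct points of `P` are at distance at least `2π` in
`A` (every walk between them has length `≥ 2π`), then every cycle in the glued
graph `A ⊔ B` has length at least `2π`. -/
theorem glued_graph_large_girth {V : Type*} (GA GB : SimpleGraph V)
    (ℓA ℓB : Sym2 V → ℝ) (P : Set V) (hPfin : P.Finite)
    (hposA : ∀ e ∈ GA.edgeSet, 0 < ℓA e)
    (hposB : ∀ e ∈ GB.edgeSet, 0 < ℓB e)
    (hedisj : GA.edgeSet ∩ GB.edgeSet = ∅)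
    (hglue : GA.support ∩ GB.support ⊆ P)
    (hcycA : ∀ (v : V) (w : GA.Walk v v), w.IsCycle → 2 * π ≤ (w.edges.map ℓA).sum)
    (hcycB : ∀ (v : V) (w : GB.Walk v v), w.IsCycle → 2 * π ≤ (w.edges.map ℓB).sum)
    (hultra : ∀ p ∈ P, ∀ q ∈ P, p ≠ q →
      ∀ w : GA.Walk p q, 2 * π ≤ (w.edges.map ℓA).sum) :
    ∀ (v : V) (w : (GA ⊔ GB).Walk v v), w.IsCycle →
      2 * π ≤ (w.edges.map (fun e => if e ∈ GA.edgeSet then ℓA e else ℓB e)).sum :=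
  glued_graph_large_girth_general GA GB ℓA ℓB P hposA hposB hedisj hglue hcycA hcycB hultra
end
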